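/- Let l, T ∈ ℕ and let φ : ℤ^l → ℤ^l be a permutation with ‖φ(x) − x‖ ≤ T for all x ∈ ℤ^l. Let Q̂ := (−1/4, …, −1/4) + [−T, 2T]^l ⊆ ℝ^l. Then there exist permutations σ₁, …, σ_{3^l} of the half-integer lattice (1/2)ℤ^l such that: (i) for each k ∈ {1,…,3^l} there is p_k ∈ {−1,0,1}^l such that for every z ∈ ℤ^l, σ_k restricts to a permutation of (1/2)ℤ^l ∩ (Q̂ + T(3z + p_k)); and (ii) φ equals the restriction to ℤ^l of the composition σ_{3^l} ∘ σ_{3^l − 1} ∘ ⋯ ∘ σ₁. -/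

import Mathlib

/-- The integer lattice `ℤ^l` inside `ℝ^l`. -/
def intLattice (l : ℕ) : Set (EuclideanSpace ℝ (Fin l)) :=
  {x | ∀ i, ∃ z : ℤ, x i = z}

/-- The half-integer lattice `(1/2)ℤ^l` inside `ℝ^l`. -/
def halfLattice (l : ℕ) : Set (EuclideanSpace ℝ (Fin l)) :=
  {x | ∀ i, ∃ z : ℤ, x i = z / 2}

/-- The tile `Q̂ + T(3z + p)` where `Q̂ = (−1/4,…,−1/4) + [−T,2T]^l`. -/
def tile (l T : ℕ) (z : Fin l → ℤ) (p : Fin l → ℝ) : Set (EuclideanSpace ℝ (Fin l)) :=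
  {x | ∀ i, -(1/4 : ℝ) - T + T * (3 * z i + p i) ≤ x i ∧
        x i ≤ -(1/4 : ℝ) + 2 * T + T * (3 * z i + p i)}

/-!
Let `c(b)` be the cube `T(3c + [-1, 2)^l)` containing `b ∈ ℤ^l` and `q(b) = c(φ b) - c(b)`,
which lies in `{-1, 0, 1}^l` since `‖φ b - b‖ ≤ T`. The point `b` and its parking place
`φ b + (1/2, …, 1/2)` lie in the same tile of the tiling shifted by `T q(b)`, so for each `q ≠ 0`
the swaps `b ↔ φ b + 1/2` over all `b` with `q(b) = q` form a permutation respecting that tiling.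
Running these `3^l - 1` stages in turn parks every `b` with `q(b) ≠ 0`, and no other stage touches
it. A last permutation respecting the unshifted tiling sends parked points and the `b` with
`q(b) = 0` to `φ b`; it exists because each tile is finite, so a tile-preserving partial injection
extends to a tile-preserving permutation.
-/

open Function

theorem List.foldl_comp_apply {α : Type*} (L : List (α → α)) (g : α → α) (x : α) :
    L.foldl (fun g h => h ∘ g) g x = L.foldl (fun y f => f y) (g x) := by
  induction L generalizing g with
  | nil => rfl
  | cons f L ih => exact ih (f ∘ g)

namespace Equiv.Perm

variable {α β γ : Type*}

theorem exists_fiberwise_extending_pair (t : α → γ) (hfin : ∀ z, (t ⁻¹' {z}).Finite)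
    {f g : β → α} (hf : Injective f) (hg : Injective g) (hfg : ∀ b, t (g b) = t (f b)) :
    ∃ σ : Perm α, (∀ a, t (σ a) = t a) ∧ ∀ b, σ (f b) = g b := by
  have hτ : ∀ z, ∃ τ : Perm {a // t a = z}, ∀ b : {b // t (f b) = z},
      τ ⟨f b, b.2⟩ = ⟨g b, (hfg b).trans b.2⟩ := by
    intro z
    have : Finite {a // t a = z} := (hfin z).to_subtype
    have : Finite {b // t (f b) = z} :=
      Finite.of_injective (fun b => (⟨f b, b.2⟩ : {a // t a = z}))
        fun b b' h => Subtype.ext (hf (congrArg Subtype.val h))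
    exact exists_extending_pair _ _ (fun b b' h => Subtype.ext (hf (congrArg Subtype.val h)))
      fun b b' h => Subtype.ext (hg (congrArg Subtype.val h))
  choose τ hτ using hτ
  refine ⟨(sigmaFiberEquiv t).permCongr (sigmaCongrRight τ), fun a => (τ (t a) ⟨a, rfl⟩).2,
    fun b => ?_⟩
  exact congrArg Subtype.val (hτ (t (f b)) ⟨b, rfl⟩)

noncomputable def pairSwap (f g : β → α) (h : Injective (Sum.elim f g)) : Perm α :=
  viaEmbedding (sumComm β β) ⟨Sum.elim f g, h⟩

variable {f g : β → α} (h : Injective (Sum.elim f g))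

theorem pairSwap_apply_left (b : β) : pairSwap f g h (f b) = g b :=
  viaEmbedding_apply _ _ (Sum.inl b)

theorem pairSwap_apply_right (b : β) : pairSwap f g h (g b) = f b :=
  viaEmbedding_apply _ _ (Sum.inr b)

theorem pairSwap_apply_of_notMem {a : α} (hf : a ∉ Set.range f) (hg : a ∉ Set.range g) :
    pairSwap f g h a = a := by
  refine viaEmbedding_apply_of_notMem _ _ _ ?_
  rintro ⟨b | b, rfl⟩
  exacts [hf ⟨b, rfl⟩, hg ⟨b, rfl⟩]

theorem apply_pairSwap (t : α → γ) (ht : ∀ b, t (g b) = t (f b)) (a : α) :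
    t (pairSwap f g h a) = t a := by
  by_cases hf : a ∈ Set.range f
  · obtain ⟨b, rfl⟩ := hf
    rw [pairSwap_apply_left, ht]
  by_cases hg : a ∈ Set.range g
  · obtain ⟨b, rfl⟩ := hg
    rw [pairSwap_apply_right, ht]
  rw [pairSwap_apply_of_notMem h hf hg]

end Equiv.Perm

namespace TilePermutation

section CubeIndex

/-- Index of the tile `[3Tz + Tq - T, 3Tz + Tq + 2T)` of the tiling of `ℤ` shifted by `Tq` that
contains `n` (and `n + 1/2`). -/
def cubeIndex (T q n : ℤ) : ℤ := (n + T - T * q) / (3 * T)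

variable {T : ℤ}

theorem cubeIndex_eq_iff (hT : 0 < T) {q n z : ℤ} :
    cubeIndex T q n = z ↔ 3 * T * z + T * q - T ≤ n ∧ n < 3 * T * z + T * q + 2 * T := by
  rw [cubeIndex, Int.ediv_eq_iff_of_pos (by positivity)]
  constructor <;> rintro ⟨h₁, h₂⟩ <;> constructor <;> linarith

theorem abs_cubeIndex_sub_le_one (hT : 0 < T) {b w : ℤ} (hwb : |w - b| ≤ T) :
    |cubeIndex T 0 w - cubeIndex T 0 b| ≤ 1 := by
  obtain ⟨hb₁, hb₂⟩ := (cubeIndex_eq_iff hT).1 (rfl : cubeIndex T 0 b = _)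
  obtain ⟨hw₁, hw₂⟩ := (cubeIndex_eq_iff hT).1 (rfl : cubeIndex T 0 w = _)
  obtain ⟨hwb₁, hwb₂⟩ := abs_le.1 hwb
  rw [abs_le]
  constructor <;> nlinarith

theorem cubeIndex_eq_of_sub_eq (hT : 0 < T) {b w q : ℤ} (hwb : |w - b| ≤ T)
    (hq : cubeIndex T 0 w = cubeIndex T 0 b + q) :
    cubeIndex T q b = cubeIndex T 0 b ∧ cubeIndex T q w = cubeIndex T 0 b := by
  obtain ⟨hb₁, hb₂⟩ := (cubeIndex_eq_iff hT).1 (rfl : cubeIndex T 0 b = _)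
  obtain ⟨hw₁, hw₂⟩ := (cubeIndex_eq_iff hT).1 hq
  obtain ⟨hwb₁, hwb₂⟩ := abs_le.1 hwb
  have hq₁ : |q| ≤ 1 := by simpa [hq] using abs_cubeIndex_sub_le_one hT hwb
  generalize cubeIndex T 0 b = m at *
  simp only [cubeIndex_eq_iff hT]
  obtain rfl | rfl | rfl : q = -1 ∨ q = 0 ∨ q = 1 := by rw [abs_le] at hq₁; omega
  all_goals refine ⟨⟨?_, ?_⟩, ?_, ?_⟩ <;> linarith

end CubeIndex

section Lattice

open Equiv.Perm

variable {l : ℕ} {T : ℤ}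

/-- The tile of the tiling of `ℝ^l` shifted by `T q` that contains `a / 2`. -/
def cell (T : ℤ) (q a : Fin l → ℤ) : Fin l → ℤ := fun i => cubeIndex T (q i) (a i / 2)

@[simp]
theorem cell_two_mul (q b : Fin l → ℤ) : cell T q (2 * b) = fun i => cubeIndex T (q i) (b i) := by
  funext i
  simp [cell]

@[simp]
theorem cell_two_mul_add_one (q b : Fin l → ℤ) :
    cell T q (2 * b + 1) = fun i => cubeIndex T (q i) (b i) := by
  funext i
  simp only [cell, Pi.add_apply, Pi.mul_apply, Pi.ofNat_apply]
  congr 2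
  omega

theorem two_mul_injective : Injective fun b : Fin l → ℤ => 2 * b := fun b c h => by
  funext i
  have := congrFun h i
  simp only [Pi.mul_apply, Pi.ofNat_apply] at this
  omega

theorem two_mul_ne_two_mul_add_one [NeZero l] (b c : Fin l → ℤ) : 2 * b ≠ 2 * c + 1 := fun h => by
  have := congrFun h 0
  simp only [Pi.add_apply, Pi.mul_apply, Pi.ofNat_apply] at this
  omega

theorem finite_cell_preimage (hT : 0 < T) (q z : Fin l → ℤ) : (cell T q ⁻¹' {z}).Finite := by
  refine (Set.Finite.pi fun i => Set.finite_Icc (2 * (3 * T * z i + T * q i - T))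
    (2 * (3 * T * z i + T * q i + 2 * T))).subset fun a ha i _ => ?_
  obtain ⟨h₁, h₂⟩ := (cubeIndex_eq_iff hT).1 (congrFun ha i)
  simp only [Set.mem_Icc]
  generalize 3 * T * z i + T * q i = c at h₁ h₂ ⊢
  constructor <;> omega

def offsets (l : ℕ) : Finset (Fin l → ℤ) := Fintype.piFinset fun _ => {-1, 0, 1}

theorem mem_offsets {q : Fin l → ℤ} : q ∈ offsets l ↔ ∀ i, q i = -1 ∨ q i = 0 ∨ q i = 1 := by
  simp [offsets]

variable (T) (ψ : Equiv.Perm (Fin l → ℤ))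

def shift (b : Fin l → ℤ) : Fin l → ℤ := fun i => cubeIndex T 0 (ψ b i) - cubeIndex T 0 (b i)

variable {T ψ}

theorem shift_mem_offsets (hT : 0 < T) (hψ : ∀ b i, |ψ b i - b i| ≤ T) (b : Fin l → ℤ) :
    shift T ψ b ∈ offsets l :=
  mem_offsets.2 fun i => by
    have := abs_le.1 (abs_cubeIndex_sub_le_one hT (hψ b i))
    simp only [shift]
    omega

variable [NeZero l]

variable (T ψ) in
/-- Moves every `b` of shift `q` to the parking place `ψ b + 1/2`, and back. -/
noncomputable def swapStage (q : Fin l → ℤ) : Equiv.Perm (Fin l → ℤ) :=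
  pairSwap (fun b : {b // shift T ψ b = q} => 2 * b.1) (fun b => 2 * ψ b.1 + 1) <|
    ((two_mul_injective.comp Subtype.val_injective).sumElim
      ((add_left_injective 1).comp (two_mul_injective.comp (ψ.injective.comp
        Subtype.val_injective))) fun _ _ => two_mul_ne_two_mul_add_one _ _)

variable {q b : Fin l → ℤ}

theorem swapStage_two_mul_of_eq (h : shift T ψ b = q) : swapStage T ψ q (2 * b) = 2 * ψ b + 1 :=
  pairSwap_apply_left _ (⟨b, h⟩ : {b // shift T ψ b = q})

theorem swapStage_two_mul_of_ne (h : shift T ψ b ≠ q) : swapStage T ψ q (2 * b) = 2 * b := by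
  refine pairSwap_apply_of_notMem _ ?_ ?_
  · rintro ⟨c, hc⟩
    exact h (two_mul_injective hc ▸ c.2)
  · rintro ⟨c, hc⟩
    exact two_mul_ne_two_mul_add_one _ _ hc.symm

theorem swapStage_park_of_ne (h : shift T ψ b ≠ q) :
    swapStage T ψ q (2 * ψ b + 1) = 2 * ψ b + 1 := by
  refine pairSwap_apply_of_notMem _ ?_ ?_
  · rintro ⟨c, hc⟩
    exact two_mul_ne_two_mul_add_one _ _ hc
  · rintro ⟨c, hc⟩
    exact h (ψ.injective (two_mul_injective (add_right_cancel hc)) ▸ c.2)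

theorem cell_swapStage (hT : 0 < T) (hψ : ∀ b i, |ψ b i - b i| ≤ T) (q a : Fin l → ℤ) :
    cell T q (swapStage T ψ q a) = cell T q a := by
  refine apply_pairSwap _ _ (fun ⟨b, hb⟩ => ?_) a
  funext i
  have hq : cubeIndex T 0 (ψ b i) = cubeIndex T 0 (b i) + q i := by
    rw [← hb, shift]
    ring
  obtain ⟨hb', hw'⟩ := cubeIndex_eq_of_sub_eq hT (hψ b i) hq
  simp [hb', hw']

theorem foldl_swapStage_park {Q : List (Fin l → ℤ)} (h : shift T ψ b ∉ Q) :
    Q.foldl (fun a q => swapStage T ψ q a) (2 * ψ b + 1) = 2 * ψ b + 1 := by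
  induction Q with
  | nil => rfl
  | cons q Q ih =>
    rw [List.mem_cons, not_or] at h
    rw [List.foldl_cons, swapStage_park_of_ne h.1, ih h.2]

theorem foldl_swapStage_two_mul {Q : List (Fin l → ℤ)} (hQ : Q.Nodup) :
    Q.foldl (fun a q => swapStage T ψ q a) (2 * b) =
      if shift T ψ b ∈ Q then 2 * ψ b + 1 else 2 * b := by
  induction Q with
  | nil => rfl
  | cons q Q ih =>
    rw [List.nodup_cons] at hQ
    rw [List.foldl_cons]
    by_cases hb : shift T ψ b = q
    · subst hb
      rw [swapStage_two_mul_of_eq rfl, foldl_swapStage_park hQ.1, if_pos List.mem_cons_self]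
    · rw [swapStage_two_mul_of_ne hb, ih hQ.2]
      simp [hb]

theorem exists_lastStage (hT : 0 < T) :
    ∃ σ : Equiv.Perm (Fin l → ℤ), (∀ a, cell T 0 (σ a) = cell T 0 a) ∧
      ∀ b, σ (if shift T ψ b = 0 then 2 * b else 2 * ψ b + 1) = 2 * ψ b := by
  refine exists_fiberwise_extending_pair _ (finite_cell_preimage hT 0) (fun b c h => ?_)
    (two_mul_injective.comp ψ.injective) fun b => ?_
  · split_ifs at h with hb hc hc
    · exact two_mul_injective h
    · exact absurd h (two_mul_ne_two_mul_add_one _ _)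
    · exact absurd h.symm (two_mul_ne_two_mul_add_one _ _)
    · exact ψ.injective (two_mul_injective (add_right_cancel h))
  · split_ifs with hb
    · funext i
      simpa [shift, sub_eq_zero] using congrFun hb i
    · simp

theorem exists_stages (hT : 0 < T) (hψ : ∀ b i, |ψ b i - b i| ≤ T) :
    ∃ L : List (Equiv.Perm (Fin l → ℤ)), L.length = 3 ^ l ∧
      (∀ σ ∈ L, ∃ q ∈ offsets l, ∀ a, cell T q (σ a) = cell T q a) ∧
      ∀ b, L.foldl (fun a σ => σ a) (2 * b) = 2 * ψ b := by
  obtain ⟨σ₀, hσ₀_cell, hσ₀⟩ := exists_lastStage (ψ := ψ) hT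
  have h0 : (0 : Fin l → ℤ) ∈ offsets l := mem_offsets.2 fun _ => by simp
  set Q := ((offsets l).erase 0).toList
  refine ⟨Q.map (swapStage T ψ) ++ [σ₀], ?_, ?_, fun b => ?_⟩
  · have : (offsets l).card = 3 ^ l := by simp [offsets]
    simp only [Q, List.length_append, List.length_map, Finset.length_toList,
      Finset.card_erase_of_mem h0, this, List.length_singleton]
    exact Nat.sub_add_cancel (Nat.one_le_pow _ _ three_pos)
  · simp only [List.mem_append, List.mem_map, List.mem_singleton]
    rintro σ (⟨q, hq, rfl⟩ | rfl)
    · exact ⟨q, Finset.mem_of_mem_erase (Finset.mem_toList.1 hq), cell_swapStage hT hψ q⟩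
    · exact ⟨0, h0, hσ₀_cell⟩
  · rw [List.foldl_append, List.foldl_map, foldl_swapStage_two_mul (Finset.nodup_toList _),
      List.foldl_cons, List.foldl_nil]
    convert hσ₀ b using 2
    by_cases h : shift T ψ b = 0 <;> simp [h, shift_mem_offsets hT hψ b]

end Lattice

section Euclidean

variable {l : ℕ}

/-- `2 * b` and `2 * b + 1` encode `b ∈ ℤ^l` and its parking place `b + (1/2, …, 1/2)`. -/
noncomputable def halfPt (a : Fin l → ℤ) : EuclideanSpace ℝ (Fin l) :=
  WithLp.toLp 2 fun i => (a i : ℝ) / 2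

@[simp]
theorem halfPt_apply (a : Fin l → ℤ) (i : Fin l) : halfPt a i = (a i : ℝ) / 2 := rfl

theorem halfPt_two_mul_apply (b : Fin l → ℤ) (i : Fin l) : halfPt (2 * b) i = b i := by
  simp

theorem halfPt_injective : Injective (halfPt (l := l)) := fun a c h => funext fun i => by
  have := congrFun (congrArg WithLp.ofLp h) i
  simp only [halfPt] at this
  have : (a i : ℝ) = c i := by linarith
  exact_mod_cast this

theorem range_halfPt : Set.range (halfPt (l := l)) = halfLattice l := by
  ext x
  refine ⟨?_, fun hx => ?_⟩
  · rintro ⟨a, rfl⟩ i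
    exact ⟨a i, rfl⟩
  · choose a ha using hx
    exact ⟨a, PiLp.ext fun i => (ha i).symm⟩

theorem range_halfPt_two_mul : Set.range (fun b : Fin l → ℤ => halfPt (2 * b)) = intLattice l := by
  ext x
  refine ⟨?_, fun hx => ?_⟩
  · rintro ⟨b, rfl⟩ i
    exact ⟨b i, halfPt_two_mul_apply b i⟩
  · choose b hb using hx
    exact ⟨b, PiLp.ext fun i => (halfPt_two_mul_apply b i).trans (hb i).symm⟩

theorem intCast_sub_quarter_le_half_iff (m a : ℤ) : (m : ℝ) - 1 / 4 ≤ (a : ℝ) / 2 ↔ m ≤ a / 2 := by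
  rw [Int.le_ediv_iff_mul_le two_pos]
  constructor <;> intro h
  · have : ((m * 2 - 1 : ℤ) : ℝ) < a := by push_cast; linarith
    have := Int.cast_lt.1 this
    omega
  · have : ((m * 2 : ℤ) : ℝ) ≤ a := by exact_mod_cast h
    push_cast at this
    linarith

theorem half_le_intCast_sub_quarter_iff (m a : ℤ) : (a : ℝ) / 2 ≤ m - 1 / 4 ↔ a / 2 < m := by
  rw [Int.ediv_lt_iff_lt_mul two_pos]
  constructor <;> intro h
  · have : (a : ℝ) < ((m * 2 : ℤ) : ℝ) := by push_cast; linarith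
    exact_mod_cast this
  · have : ((a + 1 : ℤ) : ℝ) ≤ ((m * 2 : ℤ) : ℝ) := by exact_mod_cast h
    push_cast at this
    linarith

theorem halfPt_mem_tile_iff {T : ℕ} (hT : 0 < T) {q z a : Fin l → ℤ} :
    halfPt a ∈ tile l T z (fun i => (q i : ℝ)) ↔ cell T q a = z := by
  simp only [tile, Set.mem_ofPred_eq, halfPt_apply, funext_iff, cell,
    cubeIndex_eq_iff (Int.natCast_pos.2 hT)]
  refine forall_congr' fun i => and_congr ?_ ?_
  · rw [← intCast_sub_quarter_le_half_iff]
    push_cast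
    constructor <;> intro h <;> linarith
  · rw [← half_le_intCast_sub_quarter_iff]
    push_cast
    constructor <;> intro h <;> linarith

theorem halfLattice_inter_tile {T : ℕ} (hT : 0 < T) (q z : Fin l → ℤ) :
    halfLattice l ∩ tile l T z (fun i => (q i : ℝ)) = halfPt '' {a | cell T q a = z} := by
  rw [← range_halfPt]
  ext x
  constructor
  · rintro ⟨⟨a, rfl⟩, hx⟩
    exact ⟨a, (halfPt_mem_tile_iff hT).1 hx, rfl⟩
  · rintro ⟨a, ha, rfl⟩
    exact ⟨⟨a, rfl⟩, (halfPt_mem_tile_iff hT).2 ha⟩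

noncomputable def liftHalf (f : (Fin l → ℤ) → Fin l → ℤ) (x : EuclideanSpace ℝ (Fin l)) :
    EuclideanSpace ℝ (Fin l) :=
  halfPt (f fun i => round (2 * x i))

@[simp]
theorem liftHalf_halfPt (f : (Fin l → ℤ) → Fin l → ℤ) (a : Fin l → ℤ) :
    liftHalf f (halfPt a) = halfPt (f a) := by
  simp [liftHalf, mul_div_cancel₀]

theorem bijOn_liftHalf_image (σ : Equiv.Perm (Fin l → ℤ)) {A : Set (Fin l → ℤ)}
    (hA : ∀ a, σ a ∈ A ↔ a ∈ A) : Set.BijOn (liftHalf σ) (halfPt '' A) (halfPt '' A) := by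
  refine ⟨?_, ?_, ?_⟩
  · rintro _ ⟨a, ha, rfl⟩
    exact ⟨σ a, (hA a).2 ha, (liftHalf_halfPt σ a).symm⟩
  · rintro _ ⟨a, -, rfl⟩ _ ⟨c, -, rfl⟩ h
    rw [liftHalf_halfPt, liftHalf_halfPt] at h
    rw [σ.injective (halfPt_injective h)]
  · rintro _ ⟨c, hc, rfl⟩
    exact ⟨halfPt (σ.symm c), ⟨σ.symm c, (hA _).1 (by rwa [Equiv.apply_symm_apply]), rfl⟩, by simp⟩

theorem foldl_liftHalf (L : List (Equiv.Perm (Fin l → ℤ))) (a : Fin l → ℤ) :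
    L.foldl (fun x (σ : Equiv.Perm (Fin l → ℤ)) => liftHalf σ x) (halfPt a) =
      halfPt (L.foldl (fun a σ => σ a) a) := by
  induction L generalizing a with
  | nil => rfl
  | cons σ L ih => simp only [List.foldl_cons, liftHalf_halfPt, ih]

theorem exists_perm_of_bijOn_intLattice {T : ℕ}
    {φ : EuclideanSpace ℝ (Fin l) → EuclideanSpace ℝ (Fin l)}
    (hφ : Set.BijOn φ (intLattice l) (intLattice l)) (hφT : ∀ x ∈ intLattice l, ‖φ x - x‖ ≤ T) :
    ∃ ψ : Equiv.Perm (Fin l → ℤ),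
      (∀ b, φ (halfPt (2 * b)) = halfPt (2 * ψ b)) ∧ ∀ b i, |ψ b i - b i| ≤ T := by
  let e : (Fin l → ℤ) ≃ intLattice l :=
    (Equiv.ofInjective _ (halfPt_injective.comp two_mul_injective)).trans
      (Equiv.setCongr range_halfPt_two_mul)
  have hφψ : ∀ b, φ (halfPt (2 * b)) = halfPt (2 * ((e.trans (hφ.equiv φ)).trans e.symm) b) :=
    fun b => (congrArg Subtype.val (e.apply_symm_apply (hφ.equiv φ (e b)))).symm
  refine ⟨_, hφψ, fun b i => ?_⟩
  have hmem : halfPt (2 * b) ∈ intLattice l := range_halfPt_two_mul ▸ ⟨b, rfl⟩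
  have hi := (PiLp.norm_apply_le (φ (halfPt (2 * b)) - halfPt (2 * b)) i).trans (hφT _ hmem)
  rw [hφψ] at hi
  simp only [PiLp.sub_apply, halfPt_two_mul_apply, Real.norm_eq_abs] at hi
  exact_mod_cast hi

end Euclidean

end TilePermutation

open TilePermutation in
theorem stmt_10 (l T : ℕ) (hl : 1 ≤ l) (hT : 1 ≤ T)
    (φ : EuclideanSpace ℝ (Fin l) → EuclideanSpace ℝ (Fin l))
    (hφbij : Set.BijOn φ (intLattice l) (intLattice l))
    (hφT : ∀ x ∈ intLattice l, ‖φ x - x‖ ≤ T) :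
    ∃ σs : Fin (3 ^ l) → EuclideanSpace ℝ (Fin l) → EuclideanSpace ℝ (Fin l),
      (∀ k, Set.BijOn (σs k) (halfLattice l) (halfLattice l)) ∧
      (∀ k : Fin (3 ^ l), ∃ p : Fin l → ℝ,
        (∀ i, p i = -1 ∨ p i = 0 ∨ p i = 1) ∧
        ∀ z : Fin l → ℤ,
          Set.BijOn (σs k) (halfLattice l ∩ tile l T z p) (halfLattice l ∩ tile l T z p)) ∧
      (∀ x ∈ intLattice l,
        φ x = (List.ofFn σs).foldl (fun g h => h ∘ g) id x) := by
  have : NeZero l := ⟨by omega⟩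
  obtain ⟨ψ, hφψ, hψ⟩ := exists_perm_of_bijOn_intLattice hφbij hφT
  obtain ⟨L, hlen, hcell, hfold⟩ := exists_stages (by omega) hψ
  have hL : List.ofFn (fun k : Fin (3 ^ l) => liftHalf L[k.1]) =
      L.map fun σ : Equiv.Perm (Fin l → ℤ) => liftHalf σ :=
    List.ext_getElem (by simp [hlen]) fun _ _ _ => by simp
  refine ⟨fun k => liftHalf L[k.1], fun k => ?_, fun k => ?_, ?_⟩
  · rw [← range_halfPt, ← Set.image_univ]
    exact bijOn_liftHalf_image _ fun _ => Iff.rfl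
  · obtain ⟨q, hq, hσq⟩ := hcell L[k.1] (List.getElem_mem _)
    refine ⟨fun i => q i, fun i => ?_, fun z => ?_⟩
    · rcases mem_offsets.1 hq i with h | h | h <;> simp [h]
    · rw [halfLattice_inter_tile (by omega)]
      exact bijOn_liftHalf_image _ fun a => by simp [hσq]
  · rw [← range_halfPt_two_mul]
    rintro _ ⟨b, rfl⟩
    rw [hL, List.foldl_comp_apply, List.foldl_map, id, foldl_liftHalf, hfold, hφψ]
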